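/- For l ∈ ℕ, l ≥ 1, let Q^n_l = conv( (l·[−1,1]^{n−1} × {0}) ∪ {e_n, −e_n} ) ⊂ ℝ^n, n ≥ 2. Then the successive minima of Q^n_l with respect to ℤ^n are λ_1(Q^n_l) = … = λ_{n−1}(Q^n_l) = 1/l and λ_n(Q^n_l) = 1; consequently, for 1 ≤ i ≤ n−1, σ_i(Q^n_l) = C(n−1,i)·(2l)^i + 2·C(n−1,i−1)·(2l)^{i−1}. -/

import Mathlib

/-!
Every point of `Q^n_l` lies in the box `l·[−1,1]^{n−1} × [−1,1]`, because the box is convex and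
contains the generators. Hence for `μ < 1/l` the only lattice point of `μ Q^n_l` is `0`, and for
`μ < 1` all of them lie in the hyperplane `x_n = 0`. Conversely `e_i = (1/l)(l e_i)` lies in
`(1/l) Q^n_l` for `i < n` and `e_n` lies in `Q^n_l`, which pins down all successive minima.
Since `Q^n_l` is convex and symmetric, `DQ^n_l = 2 Q^n_l`, so the numbers `1/λ_i(DQ^n_l)` are
`n − 1` copies of `2l` and one `2`; an `i`-subset either avoids the last index or contains it.
-/

open Finset Pointwise MeasureTheory

/-- The integer lattice `ℤⁿ` viewed as a subset of `ℝⁿ`. -/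
def intLattice (n : ℕ) : Set (Fin n → ℝ) := {x | ∀ j, ∃ m : ℤ, x j = (m : ℝ)}

/-- The `i`-th successive minimum (for `1 ≤ i ≤ n`) of a set `K ⊆ ℝⁿ` with respect to `ℤⁿ`:
the infimum of all `l > 0` such that `l • K` contains at least `i` linearly independent
lattice points. -/
noncomputable def succMinima {n : ℕ} (K : Set (Fin n → ℝ)) (i : ℕ) : ℝ :=
  sInf {l : ℝ | 0 < l ∧
    i ≤ Module.finrank ℝ (Submodule.span ℝ ((l • K) ∩ intLattice n))}

/-- The slab `l·[−1,1]^{n−1} × {0} ⊆ ℝⁿ`: the cube of side `2l` in the first `n−1`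
coordinates, with last coordinate `0`. -/
def cubeSlice (n l : ℕ) : Set (Fin n → ℝ) :=
  {x | ∀ j : Fin n, ((j : ℕ) < n - 1 → |x j| ≤ (l : ℝ)) ∧ ((j : ℕ) = n - 1 → x j = 0)}

/-- The `n`-th standard unit vector of `ℝⁿ` (i.e. the last coordinate vector). -/
def lastUnitVec (n : ℕ) : Fin n → ℝ := fun j => if (j : ℕ) = n - 1 then 1 else 0

/-- The bipyramid `Q^n_l = conv( (l·[−1,1]^{n−1} × {0}) ∪ {e_n, −e_n} )`. -/
def Qnl (n l : ℕ) : Set (Fin n → ℝ) :=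
  convexHull ℝ (cubeSlice n l ∪ {lastUnitVec n, -lastUnitVec n})

noncomputable def latticeRank {n : ℕ} (K : Set (Fin n → ℝ)) (μ : ℝ) : ℕ :=
  Module.finrank ℝ (Submodule.span ℝ ((μ • K) ∩ intLattice n))

section SuccessiveMinima

variable {n : ℕ} {K : Set (Fin n → ℝ)}

lemma succMinima_eq_sInf (i : ℕ) :
    succMinima K i = sInf {μ : ℝ | 0 < μ ∧ i ≤ latticeRank K μ} := rfl

lemma succMinima_eq_of_forall_le_latticeRank_iff {i : ℕ} {a : ℝ} (ha : 0 < a)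
    (h : ∀ μ, 0 < μ → (i ≤ latticeRank K μ ↔ a ≤ μ)) : succMinima K i = a := by
  have hset : {μ : ℝ | 0 < μ ∧ i ≤ latticeRank K μ} = Set.Ici a := by
    ext μ
    exact ⟨fun ⟨hμ, hi⟩ => (h μ hμ).1 hi,
      fun haμ => ⟨ha.trans_le haμ, (h μ (ha.trans_le haμ)).2 haμ⟩⟩
  rw [succMinima_eq_sInf, hset, csInf_Ici]

lemma succMinima_smul {c : ℝ} (hc : 0 < c) (i : ℕ) :
    succMinima (c • K) i = c⁻¹ * succMinima K i := by
  have hset : {μ : ℝ | 0 < μ ∧ i ≤ latticeRank (c • K) μ} =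
      c⁻¹ • {ν : ℝ | 0 < ν ∧ i ≤ latticeRank K ν} := by
    ext μ
    rw [Set.mem_smul_set_iff_inv_smul_mem₀ (inv_ne_zero hc.ne')]
    simp only [Set.mem_ofPred_eq, latticeRank, inv_inv, smul_eq_mul]
    rw [smul_smul, mul_comm c μ]
    exact and_congr_left' ⟨fun hμ => mul_pos hμ hc, fun hμc => pos_of_mul_pos_left hμc hc.le⟩
  rw [succMinima_eq_sInf, succMinima_eq_sInf, hset,
    Real.sInf_smul_of_nonneg (inv_nonneg.2 hc.le), smul_eq_mul]

lemma single_one_mem_intLattice (i : Fin n) : (Pi.single i 1 : Fin n → ℝ) ∈ intLattice n := by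
  intro j
  by_cases h : j = i
  · exact ⟨1, by simp [h]⟩
  · exact ⟨0, by simp [h]⟩

lemma card_le_latticeRank {μ : ℝ} (s : Finset (Fin n))
    (hs : ∀ i ∈ s, (Pi.single i 1 : Fin n → ℝ) ∈ μ • K) : #s ≤ latticeRank K μ := by
  set e : s → (Fin n → ℝ) := fun i => Pi.single (i : Fin n) 1
  have he : LinearIndependent ℝ e := by
    have := (Pi.basisFun ℝ (Fin n)).linearIndependent.comp ((↑) : s → Fin n) Subtype.val_injective
    simpa [e, Function.comp_def] using this
  calc #s = Module.finrank ℝ (Submodule.span ℝ (Set.range e)) := by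
        rw [finrank_span_eq_card he, Fintype.card_coe]
    _ ≤ latticeRank K μ := by
        refine Submodule.finrank_mono (Submodule.span_mono ?_)
        rintro _ ⟨i, rfl⟩
        exact ⟨hs i i.2, single_one_mem_intLattice (i : Fin n)⟩

lemma apply_eq_zero_of_mem_intLattice {x : Fin n → ℝ} (hx : x ∈ intLattice n) {j : Fin n}
    (h : |x j| < 1) : x j = 0 := by
  obtain ⟨m, hm⟩ := hx j
  rw [hm, ← Int.cast_abs, ← Int.cast_one, Int.cast_lt, Int.abs_lt_one_iff] at h
  simp [hm, h]

lemma apply_eq_zero_of_mem_smul_inter_intLattice {μ c : ℝ} {j : Fin n} (hμ : 0 < μ)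
    (hK : ∀ y ∈ K, |y j| ≤ c) (hc : μ * c < 1) {x : Fin n → ℝ}
    (hx : x ∈ (μ • K) ∩ intLattice n) : x j = 0 := by
  obtain ⟨⟨y, hy, rfl⟩, hlat⟩ := hx
  refine apply_eq_zero_of_mem_intLattice hlat ?_
  change |(μ • y) j| < 1
  rw [Pi.smul_apply, smul_eq_mul, abs_mul, abs_of_pos hμ]
  exact (mul_le_mul_of_nonneg_left (hK y hy) hμ.le).trans_lt hc

lemma latticeRank_eq_zero {μ : ℝ} (h : ∀ x ∈ (μ • K) ∩ intLattice n, x = 0) :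
    latticeRank K μ = 0 := by
  rw [latticeRank, Submodule.span_eq_bot.2 h]
  exact finrank_bot ℝ _

lemma latticeRank_lt_of_forall_apply_eq_zero {μ : ℝ} (j : Fin n)
    (h : ∀ x ∈ (μ • K) ∩ intLattice n, x j = 0) : latticeRank K μ < n := by
  let π : (Fin n → ℝ) →ₗ[ℝ] ℝ := LinearMap.proj j
  have hker : LinearMap.ker π ≠ ⊤ := fun htop => by
    simpa [π] using LinearMap.congr_fun (LinearMap.ker_eq_top.1 htop) (Pi.single j 1)
  calc latticeRank K μ ≤ Module.finrank ℝ (LinearMap.ker π) :=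
        Submodule.finrank_mono (Submodule.span_le.2 h)
    _ < Module.finrank ℝ (Fin n → ℝ) := Submodule.finrank_lt hker
    _ = n := Module.finrank_fin_fun ℝ

end SuccessiveMinima

lemma Convex.sub_self_eq_two_smul {E : Type*} [AddCommGroup E] [Module ℝ E] {s : Set E}
    (hs : Convex ℝ s) (hneg : -s = s) : s - s = (2 : ℝ) • s := by
  rw [sub_eq_add_neg, hneg, ← one_add_one_eq_two, hs.add_smul zero_le_one zero_le_one, one_smul]

lemma abs_apply_le_of_mem_convexHull {ι : Type*} {s : Set (ι → ℝ)} {c : ℝ} {j : ι}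
    (hs : ∀ y ∈ s, |y j| ≤ c) {x : ι → ℝ} (hx : x ∈ convexHull ℝ s) : |x j| ≤ c := by
  have hset : {y : ι → ℝ | |y j| ≤ c} =
      LinearMap.proj (R := ℝ) (φ := fun _ : ι => ℝ) j ⁻¹' Set.Icc (-c) c := by
    ext y
    simp [abs_le]
  have hconv : Convex ℝ {y : ι → ℝ | |y j| ≤ c} :=
    hset ▸ (convex_Icc (-c) c).linear_preimage _
  exact convexHull_min hs hconv hx

section Bipyramid

variable {n m l : ℕ}

lemma zero_mem_Qnl : (0 : Fin n → ℝ) ∈ Qnl n l :=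
  subset_convexHull ℝ _ (Or.inl fun j => by simp)

lemma neg_Qnl : -Qnl n l = Qnl n l := by
  have hcube : -cubeSlice n l = cubeSlice n l := by
    ext x
    simp [cubeSlice]
  rw [Qnl, ← convexHull_neg, Set.union_neg, hcube, Set.neg_insert, Set.neg_singleton, neg_neg,
    Set.pair_comm]

lemma Qnl_sub_Qnl : Qnl n l - Qnl n l = (2 : ℝ) • Qnl n l :=
  (convex_convexHull ℝ _).sub_self_eq_two_smul neg_Qnl

lemma lastUnitVec_succ : lastUnitVec (m + 1) = Pi.single (Fin.last m) 1 := by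
  ext j
  simp [lastUnitVec, Pi.single_apply, Fin.ext_iff]

lemma abs_apply_le_of_mem_Qnl (hl : 1 ≤ l) {x : Fin n → ℝ} (hx : x ∈ Qnl n l) (j : Fin n) :
    |x j| ≤ l := by
  have hl' : (1 : ℝ) ≤ l := by exact_mod_cast hl
  refine abs_apply_le_of_mem_convexHull ?_ hx
  rintro y (hy | hy | hy)
  · by_cases hj : (j : ℕ) < n - 1
    · exact (hy j).1 hj
    · simp [(hy j).2 (by omega)]
  all_goals
    subst hy
    by_cases hj : (j : ℕ) = n - 1 <;> simp [lastUnitVec, hj, hl']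

lemma abs_apply_last_le_of_mem_Qnl {x : Fin (m + 1) → ℝ} (hx : x ∈ Qnl (m + 1) l) :
    |x (Fin.last m)| ≤ 1 := by
  refine abs_apply_le_of_mem_convexHull ?_ hx
  rintro y (hy | hy | hy)
  · simp [(hy (Fin.last m)).2 (by simp)]
  all_goals
    subst hy
    simp [lastUnitVec_succ]

lemma single_mem_smul_Qnl (hl : 1 ≤ l) {μ : ℝ} (hμ : 1 / (l : ℝ) ≤ μ) {j : Fin (m + 1)}
    (hj : j ≠ Fin.last m) : (Pi.single j 1 : Fin (m + 1) → ℝ) ∈ μ • Qnl (m + 1) l := by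
  have hl0 : (0 : ℝ) < l := by exact_mod_cast hl
  have hμl : 1 ≤ μ * l := by rwa [div_le_iff₀ hl0] at hμ
  have hμ0 : 0 < μ := (one_div_pos.2 hl0).trans_le hμ
  have hgen : (l : ℝ) • (Pi.single j 1 : Fin (m + 1) → ℝ) ∈ Qnl (m + 1) l := by
    refine subset_convexHull ℝ _ (Or.inl fun i => ⟨fun _ => ?_, fun hi => ?_⟩)
    · by_cases h : i = j <;> simp [h]
    · have : i ≠ j := by
        rintro rfl
        exact hj (Fin.ext (by simpa using hi))
      simp [this]
  rw [Set.mem_smul_set_iff_inv_smul_mem₀ hμ0.ne',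
    show μ⁻¹ • (Pi.single j 1 : Fin (m + 1) → ℝ) = (μ * l)⁻¹ • (l : ℝ) • Pi.single j 1 by
      rw [smul_smul, mul_inv, mul_assoc, inv_mul_cancel₀ hl0.ne', mul_one]]
  exact (convex_convexHull ℝ _).smul_mem_of_zero_mem zero_mem_Qnl hgen
    ⟨by positivity, inv_le_one_of_one_le₀ hμl⟩

lemma single_last_mem_smul_Qnl {μ : ℝ} (hμ : 1 ≤ μ) :
    (Pi.single (Fin.last m) 1 : Fin (m + 1) → ℝ) ∈ μ • Qnl (m + 1) l :=
  (convex_convexHull ℝ _).mem_smul_of_zero_mem zero_mem_Qnl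
    (subset_convexHull ℝ _ (Or.inr (Or.inl (lastUnitVec_succ).symm))) hμ

lemma le_latticeRank_Qnl_iff (hl : 1 ≤ l) {i : ℕ} (hi : 1 ≤ i) (him : i ≤ m) {μ : ℝ}
    (hμ : 0 < μ) : i ≤ latticeRank (Qnl (m + 1) l) μ ↔ 1 / (l : ℝ) ≤ μ := by
  constructor
  · intro hrank
    by_contra! hlt
    have hμl : μ * l < 1 := by rwa [lt_div_iff₀ (by exact_mod_cast hl)] at hlt
    have hzero : latticeRank (Qnl (m + 1) l) μ = 0 := latticeRank_eq_zero fun x hx =>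
      funext fun j => apply_eq_zero_of_mem_smul_inter_intLattice hμ
        (fun y hy => abs_apply_le_of_mem_Qnl hl hy j) hμl hx
    omega
  · intro hμl
    calc i ≤ #(univ.erase (Fin.last m)) := by simpa using him
      _ ≤ latticeRank (Qnl (m + 1) l) μ := card_le_latticeRank _ fun j hj =>
        single_mem_smul_Qnl hl hμl (ne_of_mem_erase hj)

lemma succ_le_latticeRank_Qnl_iff (hl : 1 ≤ l) {μ : ℝ} (hμ : 0 < μ) :
    m + 1 ≤ latticeRank (Qnl (m + 1) l) μ ↔ 1 ≤ μ := by
  constructor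
  · intro hrank
    by_contra! hlt
    have := latticeRank_lt_of_forall_apply_eq_zero (K := Qnl (m + 1) l) (Fin.last m) fun x hx =>
      apply_eq_zero_of_mem_smul_inter_intLattice hμ
        (fun y hy => abs_apply_last_le_of_mem_Qnl hy) (by simpa using hlt) hx
    omega
  · intro hμ1
    have hl1 : 1 / (l : ℝ) ≤ 1 := by
      rw [div_le_one (by exact_mod_cast hl)]
      exact_mod_cast hl
    calc m + 1 = #(univ : Finset (Fin (m + 1))) := by simp
      _ ≤ latticeRank (Qnl (m + 1) l) μ := card_le_latticeRank _ fun j _ => by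
        by_cases hj : j = Fin.last m
        · exact hj ▸ single_last_mem_smul_Qnl hμ1
        · exact single_mem_smul_Qnl hl (hl1.trans hμ1) hj

lemma succMinima_Qnl (hl : 1 ≤ l) {i : ℕ} (hi : 1 ≤ i) (him : i ≤ m) :
    succMinima (Qnl (m + 1) l) i = 1 / l :=
  succMinima_eq_of_forall_le_latticeRank_iff (by positivity)
    fun _ hμ => le_latticeRank_Qnl_iff hl hi him hμ

lemma succMinima_Qnl_succ (hl : 1 ≤ l) : succMinima (Qnl (m + 1) l) (m + 1) = 1 :=
  succMinima_eq_of_forall_le_latticeRank_iff one_pos fun _ hμ => succ_le_latticeRank_Qnl_iff hl hμ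

lemma one_div_succMinima_Qnl_sub_Qnl (hl : 1 ≤ l) (j : Fin (m + 1)) :
    1 / succMinima (Qnl (m + 1) l - Qnl (m + 1) l) ((j : ℕ) + 1) =
      if j = Fin.last m then 2 else 2 * (l : ℝ) := by
  rw [Qnl_sub_Qnl, succMinima_smul two_pos]
  split_ifs with hj
  · rw [hj, Fin.val_last, succMinima_Qnl_succ hl]
    norm_num
  · rw [succMinima_Qnl hl (by omega) (Fin.val_lt_last hj)]
    field_simp

end Bipyramid

section ElementarySymmetric

variable {ι R : Type*} [DecidableEq ι]

lemma Finset.sum_powersetCard_succ_insert [AddCommMonoid R] {s : Finset ι} {a : ι} (ha : a ∉ s)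
    (k : ℕ) (f : Finset ι → R) :
    ∑ t ∈ (insert a s).powersetCard (k + 1), f t =
      ∑ t ∈ s.powersetCard (k + 1), f t + ∑ t ∈ s.powersetCard k, f (insert a t) := by
  have hnotMem : ∀ t ∈ s.powersetCard k, a ∉ t := fun t ht hat =>
    ha ((mem_powersetCard.1 ht).1 hat)
  rw [powersetCard_succ_insert ha, sum_union, sum_image]
  · intro t ht u hu htu
    rw [← erase_insert (hnotMem t ht), htu, erase_insert (hnotMem u hu)]
  · refine disjoint_left.2 fun t ht htu => ?_
    obtain ⟨u, -, rfl⟩ := mem_image.1 htu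
    exact ha ((mem_powersetCard.1 ht).1 (mem_insert_self a u))

lemma Finset.sum_powersetCard_prod_ite_eq [CommSemiring R] {s : Finset ι} {i₀ : ι} (h : i₀ ∈ s)
    (a b : R) (k : ℕ) :
    ∑ t ∈ s.powersetCard (k + 1), ∏ j ∈ t, (if j = i₀ then b else a) =
      (#s - 1).choose (k + 1) * a ^ (k + 1) + b * ((#s - 1).choose k * a ^ k) := by
  have hprod : ∀ t ⊆ s.erase i₀, ∏ j ∈ t, (if j = i₀ then b else a) = a ^ #t := fun t ht => by
    rw [prod_congr rfl fun j hj => if_neg (ne_of_mem_erase (ht hj)), prod_const]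
  have hinsert : ∀ t ∈ (s.erase i₀).powersetCard k,
      ∏ j ∈ insert i₀ t, (if j = i₀ then b else a) = b * a ^ #t := fun t ht => by
    have hsub := (mem_powersetCard.1 ht).1
    rw [prod_insert fun hi => notMem_erase i₀ s (hsub hi), if_pos rfl, hprod t hsub]
  conv_lhs => rw [← insert_erase h, sum_powersetCard_succ_insert (notMem_erase i₀ s)]
  rw [sum_congr rfl fun t ht => hprod t (mem_powersetCard.1 ht).1, sum_congr rfl hinsert,
    ← mul_sum, sum_powersetCard, sum_powersetCard, card_erase_of_mem h, nsmul_eq_mul,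
    nsmul_eq_mul]

end ElementarySymmetric

/-- The successive minima of `Q^n_l` with respect to `ℤⁿ` are
`λ_1 = … = λ_{n−1} = 1/l` and `λ_n = 1`; consequently, for `1 ≤ i ≤ n−1`,
`σ_i(Q^n_l) = C(n−1,i)(2l)^i + 2·C(n−1,i−1)(2l)^{i−1}`, where `σ_i(Q^n_l)` is the `i`-th
elementary symmetric polynomial in `1/λ_1(DQ^n_l),…,1/λ_n(DQ^n_l)` and `DQ^n_l` is the
difference body. -/
theorem stmt18 (n l : ℕ) (hn : 2 ≤ n) (hl : 1 ≤ l) :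
    (∀ j : ℕ, 1 ≤ j → j ≤ n - 1 → succMinima (Qnl n l) j = 1 / (l : ℝ)) ∧
    succMinima (Qnl n l) n = 1 ∧
    (∀ i : ℕ, 1 ≤ i → i ≤ n - 1 →
      (∑ I ∈ (Finset.univ : Finset (Fin n)).powersetCard i,
          ∏ j ∈ I, 1 / succMinima (Qnl n l - Qnl n l) ((j : ℕ) + 1)) =
        ((n - 1).choose i : ℝ) * (2 * (l : ℝ)) ^ i +
          2 * ((n - 1).choose (i - 1) : ℝ) * (2 * (l : ℝ)) ^ (i - 1)) := by
  obtain ⟨m, rfl⟩ : ∃ m, n = m + 1 := ⟨n - 1, by omega⟩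
  rw [Nat.add_sub_cancel]
  refine ⟨fun j hj hjm => succMinima_Qnl hl hj hjm, succMinima_Qnl_succ hl, ?_⟩
  rintro i hi -
  obtain ⟨k, rfl⟩ : ∃ k, i = k + 1 := ⟨i - 1, by omega⟩
  simp_rw [one_div_succMinima_Qnl_sub_Qnl hl]
  rw [sum_powersetCard_prod_ite_eq (mem_univ _), card_univ, Fintype.card_fin, Nat.add_sub_cancel,
    Nat.add_sub_cancel]
  ring
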